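/- For the syntactic pomset automaton A_Σ on sr-expressions, the following hold for all expressions e, f: L_Σ(0) = ∅; L_Σ(1) = {1}; L_Σ(a) = {a} for a ∈ Σ; L_Σ(e + f) = L_Σ(e) ∪ L_Σ(f); L_Σ(e · f) = L_Σ(e) · L_Σ(f); L_Σ(e ∥ f) = L_Σ(e) ∥ L_Σ(f); L_Σ(e*) = L_Σ(e)*. Consequently, L_Σ(e) = ⟦e⟧ for all sr-expressions e. -/

import Mathlib

/-!
Soundness: each derivative step is justified by the semantics (`g ∈ δ(e, a)` gives
`a · ⟦g⟧ ⊆ ⟦e⟧`, and likewise for `γ`), so a run `e →^U f` gives `U · ⟦f⟧ ⊆ ⟦e⟧`.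

Completeness, by induction on `e`, rests on one observation about arbitrary pomset automata:
if every derivative of `q₁` is a derivative of `q₂` and `q₂` is accepting whenever `q₁` is,
then `L(q₁) ⊆ L(q₂)`, since a run from `q₁` is either trivial or starts with a step that `q₂`
can take as well. The derivatives of `e + f` include those of `e` and of `f`, those of
`g · f` include those of `f` when `g ∈ F`, and those of `e*` include those of `e · e*`.
-/

namespace WBKA

/-- Series-parallel terms over an alphabet `A`. -/
inductive SPTerm (A : Type) : Type
  | one : SPTerm A
  | atom : A → SPTerm A
  | seq : SPTerm A → SPTerm A → SPTerm A
  | par : SPTerm A → SPTerm A → SPTerm A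

/-- The congruence generated by the series-parallel pomset axioms:
associativity of both compositions, commutativity of parallel composition,
and the empty pomset acting as unit for both. -/
inductive SPEquiv {A : Type} : SPTerm A → SPTerm A → Prop
  | refl (u : SPTerm A) : SPEquiv u u
  | symm {u v : SPTerm A} : SPEquiv u v → SPEquiv v u
  | trans {u v w : SPTerm A} : SPEquiv u v → SPEquiv v w → SPEquiv u w
  | seqCongr {u u' v v' : SPTerm A} :
      SPEquiv u u' → SPEquiv v v' → SPEquiv (u.seq v) (u'.seq v')
  | parCongr {u u' v v' : SPTerm A} :
      SPEquiv u u' → SPEquiv v v' → SPEquiv (u.par v) (u'.par v')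
  | seqAssoc (u v w : SPTerm A) : SPEquiv ((u.seq v).seq w) (u.seq (v.seq w))
  | parAssoc (u v w : SPTerm A) : SPEquiv ((u.par v).par w) (u.par (v.par w))
  | parComm (u v : SPTerm A) : SPEquiv (u.par v) (v.par u)
  | seqOneLeft (u : SPTerm A) : SPEquiv (SPTerm.one.seq u) u
  | seqOneRight (u : SPTerm A) : SPEquiv (u.seq SPTerm.one) u
  | parOne (u : SPTerm A) : SPEquiv (u.par SPTerm.one) u

instance spSetoid (A : Type) : Setoid (SPTerm A) :=
  ⟨SPEquiv, SPEquiv.refl, SPEquiv.symm, SPEquiv.trans⟩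

/-- Series-parallel pomsets over `A`, as the free algebra on the sp-pomset axioms. -/
def Pomset (A : Type) : Type := Quotient (spSetoid A)

namespace Pomset

variable {A : Type}

def mk (u : SPTerm A) : Pomset A := Quotient.mk (spSetoid A) u

/-- The empty pomset `1`. -/
def eps : Pomset A := mk SPTerm.one

/-- The primitive pomset consisting of a single event labelled `a`. -/
def atom (a : A) : Pomset A := mk (SPTerm.atom a)

/-- Sequential composition of pomsets. -/
def seq : Pomset A → Pomset A → Pomset A :=
  Quotient.lift₂ (fun u v => mk (u.seq v))
    (fun _ _ _ _ hu hv => Quotient.sound (SPEquiv.seqCongr hu hv))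

/-- Parallel composition of pomsets. -/
def par : Pomset A → Pomset A → Pomset A :=
  Quotient.lift₂ (fun u v => mk (u.par v))
    (fun _ _ _ _ hu hv => Quotient.sound (SPEquiv.parCongr hu hv))

/-- `U` is the empty pomset. -/
def IsEmptyP (U : Pomset A) : Prop := U = eps

/-- `U` is primitive: it consists of a single labelled event. -/
def Primitive (U : Pomset A) : Prop := ∃ a : A, U = atom a

/-- `U` is sequential: a sequential composition of two non-empty pomsets. -/
def Sequential (U : Pomset A) : Prop :=
  ∃ V W : Pomset A, V ≠ eps ∧ W ≠ eps ∧ U = seq V W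

/-- `U` is parallel: a parallel composition of two non-empty pomsets. -/
def Parallel (U : Pomset A) : Prop :=
  ∃ V W : Pomset A, V ≠ eps ∧ W ≠ eps ∧ U = par V W

/-- `U` is a sequential prime. -/
def SeqPrime (U : Pomset A) : Prop :=
  U ≠ eps ∧ ∀ V W : Pomset A, U = seq V W → V = eps ∨ W = eps

/-- `U` is a parallel prime. -/
def ParPrime (U : Pomset A) : Prop :=
  U ≠ eps ∧ ∀ V W : Pomset A, U = par V W → V = eps ∨ W = eps

/-- Sequential product of a list of pomsets. -/
def seqProd (l : List (Pomset A)) : Pomset A := l.foldr seq eps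

/-- Parallel product of a list of pomsets. -/
def parProd (l : List (Pomset A)) : Pomset A := l.foldr par eps

end Pomset

/-- Pointwise sequential composition of pomset languages. -/
def langSeq {A : Type} (L M : Set (Pomset A)) : Set (Pomset A) :=
  Set.image2 Pomset.seq L M

/-- Pointwise parallel composition of pomset languages. -/
def langPar {A : Type} (L M : Set (Pomset A)) : Set (Pomset A) :=
  Set.image2 Pomset.par L M

/-- `n`-fold sequential power of a language. -/
def langPow {A : Type} (L : Set (Pomset A)) : ℕ → Set (Pomset A)
  | 0 => {Pomset.eps}
  | n + 1 => langSeq L (langPow L n)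

/-- Kleene closure of a pomset language. -/
def langStar {A : Type} (L : Set (Pomset A)) : Set (Pomset A) :=
  ⋃ n : ℕ, langPow L n

/-- Series-rational expressions over `A`. -/
inductive SR (A : Type) : Type
  | zero : SR A
  | one : SR A
  | atom : A → SR A
  | plus : SR A → SR A → SR A
  | seq : SR A → SR A → SR A
  | par : SR A → SR A → SR A
  | star : SR A → SR A

/-- The sp-language semantics of series-rational expressions. -/
def sem {A : Type} : SR A → Set (Pomset A)
  | .zero => ∅
  | .one => {Pomset.eps}
  | .atom a => {Pomset.atom a}
  | .plus e f => sem e ∪ sem f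
  | .seq e f => langSeq (sem e) (sem f)
  | .par e f => langPar (sem e) (sem f)
  | .star e => langStar (sem e)

/-- The syntactic predicate `F` characterising acceptance of the empty pomset. -/
inductive EF {A : Type} : SR A → Prop
  | one : EF SR.one
  | plusLeft {e : SR A} (f : SR A) : EF e → EF (SR.plus e f)
  | plusRight (e : SR A) {f : SR A} : EF f → EF (SR.plus e f)
  | seq {e f : SR A} : EF e → EF f → EF (SR.seq e f)
  | par {e f : SR A} : EF e → EF f → EF (SR.par e f)
  | star (e : SR A) : EF (SR.star e)

/-- Pomset automata. -/
structure PA (A : Type) (Q : Type) where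
  acc : Set Q
  δ : Q → A → Set Q
  γ : Q → Multiset Q → Set Q

/-- The run relation of a pomset automaton. -/
inductive Run {A Q : Type} (M : PA A Q) : Q → Pomset A → Q → Prop
  | triv (q : Q) : Run M q Pomset.eps q
  | seqUnit {q : Q} {a : A} {q' : Q} :
      q' ∈ M.δ q a → Run M q (Pomset.atom a) q'
  | comp {q : Q} {U : Pomset A} {q'' : Q} {V : Pomset A} {q' : Q} :
      Run M q U q'' → Run M q'' V q' → Run M q (U.seq V) q'
  | parUnit {q q' : Q} (l : List (Q × Pomset A × Q)) :
      q' ∈ M.γ q (↑(l.map Prod.fst) : Multiset Q) →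
      (∀ x ∈ l, x.2.2 ∈ M.acc) →
      (∀ x ∈ l, Run M x.1 x.2.1 x.2.2) →
      Run M q (Pomset.parProd (l.map fun x => x.2.1)) q'

/-- Language of a state of a pomset automaton. -/
def PA.lang {A Q : Type} (M : PA A Q) (q : Q) : Set (Pomset A) :=
  {U | ∃ q' ∈ M.acc, Run M q U q'}

/-- The triple `q →^U q'` matches the trivial-run rule. -/
def TrivialRun {A Q : Type} (_M : PA A Q) (q : Q) (U : Pomset A) (q' : Q) : Prop :=
  U = Pomset.eps ∧ q = q'

/-- `q →^U q'` is a sequential unit run. -/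
def SeqUnitRun {A Q : Type} (M : PA A Q) (q : Q) (U : Pomset A) (q' : Q) : Prop :=
  ∃ a : A, U = Pomset.atom a ∧ q' ∈ M.δ q a

/-- `q →^U q'` is a parallel unit run. -/
def ParUnitRun {A Q : Type} (M : PA A Q) (q : Q) (U : Pomset A) (q' : Q) : Prop :=
  ∃ l : List (Q × Pomset A × Q),
    q' ∈ M.γ q (↑(l.map Prod.fst) : Multiset Q) ∧
    (∀ x ∈ l, x.2.2 ∈ M.acc ∧ Run M x.1 x.2.1 x.2.2) ∧
    U = Pomset.parProd (l.map fun x => x.2.1)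

/-- `q →^U q'` is a unit run: a sequential or a parallel unit run. -/
def UnitRun {A Q : Type} (M : PA A Q) (q : Q) (U : Pomset A) (q' : Q) : Prop :=
  SeqUnitRun M q U q' ∨ ParUnitRun M q U q'

/-- `q →^U q'` is a composite run: a sequential composition of two non-trivial runs. -/
def CompositeRun {A Q : Type} (M : PA A Q) (q : Q) (U : Pomset A) (q' : Q) : Prop :=
  ∃ (V W : Pomset A) (q'' : Q),
    U = V.seq W ∧ Run M q V q'' ∧ Run M q'' W q' ∧
    ¬ TrivialRun M q V q'' ∧ ¬ TrivialRun M q'' W q'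

/-- The support preorder: `Supports M q' q` means `q' ⪯ q`. -/
inductive Supports {A Q : Type} (M : PA A Q) : Q → Q → Prop
  | refl (q : Q) : Supports M q q
  | trans {q r p : Q} : Supports M q r → Supports M r p → Supports M q p
  | deltaStep {q : Q} {a : A} {q' : Q} : q' ∈ M.δ q a → Supports M q' q
  | gammaStep {q : Q} {φ : Multiset Q} {q' : Q} : q' ∈ M.γ q φ → Supports M q' q
  | forkStep {q : Q} {φ : Multiset Q} {r : Q} :
      r ∈ φ → (M.γ q φ).Nonempty → Supports M r q

/-- A pomset automaton is fork-acyclic when every fork target `r` of `q`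
satisfies `r ≺ q`, i.e. `q ⋠ r`. -/
def ForkAcyclic {A Q : Type} (M : PA A Q) : Prop :=
  ∀ (q : Q) (φ : Multiset Q) (r : Q),
    r ∈ φ → (M.γ q φ).Nonempty → ¬ Supports M q r

/-- A set of states is support-closed. -/
def SupportClosed {A Q : Type} (M : PA A Q) (S : Set Q) : Prop :=
  ∀ q ∈ S, ∀ q' : Q, Supports M q' q → q' ∈ S

/-- Restriction of a pomset automaton to a set of states. -/
def PA.restrict {A Q : Type} (M : PA A Q) (S : Set Q) : PA A {q : Q // q ∈ S} where
  acc := {q | q.val ∈ M.acc}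
  δ := fun q a => {r | r.val ∈ M.δ q.val a}
  γ := fun q φ => {r | r.val ∈ M.γ q.val (φ.map Subtype.val)}

/-- `n`-forking automata. -/
def NForking {A Q : Type} (M : PA A Q) (n : ℕ) : Prop :=
  ∀ (q : Q) (φ : Multiset Q), (M.γ q φ).Nonempty → n ≤ Multiset.card φ

/-- Parsimonious automata: no fork target accepts the empty pomset. -/
def Parsimonious {A Q : Type} (M : PA A Q) : Prop :=
  ∀ (p : Q) (φ : Multiset Q) (q : Q),
    q ∈ φ → (M.γ p φ).Nonempty → Pomset.eps ∉ M.lang q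

/-- Flat-branching automata: forks from fork targets never reach accepting states. -/
def FlatBranching {A Q : Type} (M : PA A Q) : Prop :=
  ∀ (p : Q) (φ : Multiset Q) (q : Q),
    q ∈ φ → (M.γ p φ).Nonempty → ∀ ψ : Multiset Q, M.γ q ψ ∩ M.acc = ∅

/-- Well-structured pomset automata. -/
def WellStructured {A Q : Type} (M : PA A Q) : Prop :=
  (∀ (q : Q) (φ : Multiset Q), (M.γ q φ).Nonempty → 2 ≤ Multiset.card φ) ∧
  ∀ (p : Q) (φ : Multiset Q) (q : Q), q ∈ φ → (M.γ p φ).Nonempty →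
    q ∉ M.acc ∧ ∀ ψ : Multiset Q, M.γ q ψ ∩ M.acc = ∅

/-- The relation `⇝` characterising runs labelled by the empty pomset. -/
inductive Leadsto {A Q : Type} (M : PA A Q) : Q → Q → Prop
  | refl (p : Q) : Leadsto M p p
  | trans {p r q : Q} : Leadsto M p r → Leadsto M r q → Leadsto M p q
  | fork {p q : Q} (l : List (Q × Q)) :
      q ∈ M.γ p (↑(l.map Prod.fst) : Multiset Q) →
      (∀ x ∈ l, x.2 ∈ M.acc) →
      (∀ x ∈ l, Leadsto M x.1 x.2) →
      Leadsto M p q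

/-- Concatenate each expression of a set with `f` on the right. -/
def seqAfter {A : Type} (T : Set (SR A)) (f : SR A) : Set (SR A) :=
  (fun g => SR.seq g f) '' T

/-- Antimirov-style sequential derivatives of sr-expressions. -/
def deltaS {A : Type} : SR A → A → Set (SR A)
  | .zero, _ => ∅
  | .one, _ => ∅
  | .atom b, a => {g | g = SR.one ∧ a = b}
  | .plus e f, a => deltaS e a ∪ deltaS f a
  | .seq e f, a => seqAfter (deltaS e a) f ∪ {g | g ∈ deltaS f a ∧ EF e}
  | .par _ _, _ => ∅
  | .star e, a => seqAfter (deltaS e a) (SR.star e)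

/-- Antimirov-style parallel derivatives of sr-expressions. -/
def gammaS {A : Type} : SR A → Multiset (SR A) → Set (SR A)
  | .zero, _ => ∅
  | .one, _ => ∅
  | .atom _, _ => ∅
  | .plus e f, φ => gammaS e φ ∪ gammaS f φ
  | .seq e f, φ => seqAfter (gammaS e φ) f ∪ {g | g ∈ gammaS f φ ∧ EF e}
  | .par e f, φ => {g | g = SR.one ∧ φ = {e, f}}
  | .star e, φ => seqAfter (gammaS e φ) (SR.star e)

/-- The syntactic pomset automaton on sr-expressions. -/
def synPA (A : Type) : PA A (SR A) where
  acc := {e | EF e}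
  δ := deltaS
  γ := gammaS

/-- The parallel-nesting depth of an sr-expression. -/
def pdepth {A : Type} : SR A → ℕ
  | .zero => 0
  | .one => 0
  | .atom _ => 0
  | .plus e f => max (pdepth e) (pdepth f)
  | .seq e f => max (pdepth e) (pdepth f)
  | .par e f => max (pdepth e) (pdepth f) + 1
  | .star e => pdepth e

/-- A substitution `ζ : Σ → 2^{SP(Δ)}` is atomic. -/
def Atomic {A B : Type} (ζ : A → Set (Pomset B)) : Prop :=
  (∀ a : A, ∀ U ∈ ζ a, Pomset.SeqPrime U) ∧
  (∀ a b : A, (ζ a ∩ ζ b).Nonempty ↔ a = b)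

/-- Extension of a substitution to words. -/
def substWord {A B : Type} (ζ : A → Set (Pomset B)) : List A → Set (Pomset B)
  | [] => {Pomset.eps}
  | a :: w => langSeq (ζ a) (substWord ζ w)

/-- Extension of a substitution to word languages. -/
def substLang {A B : Type} (ζ : A → Set (Pomset B)) (L : Set (List A)) :
    Set (Pomset B) :=
  ⋃ w ∈ L, substWord ζ w

/-- `L_A(α)` for a set `α` of states: the atom language of `α`. -/
def atomLang {Q U : Type} (LA : Q → Set U) (α : Set Q) : Set U :=
  (⋂ q ∈ α, LA q) \ (⋃ (q : Q) (_ : q ∉ α), LA q)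

namespace Pomset

variable {A : Type}

@[simp] lemma seq_eps_left (U : Pomset A) : seq eps U = U :=
  Quotient.inductionOn U fun u => Quotient.sound (SPEquiv.seqOneLeft u)

@[simp] lemma seq_eps_right (U : Pomset A) : seq U eps = U :=
  Quotient.inductionOn U fun u => Quotient.sound (SPEquiv.seqOneRight u)

lemma seq_assoc (U V W : Pomset A) : seq (seq U V) W = seq U (seq V W) :=
  Quotient.inductionOn₃ U V W fun u v w => Quotient.sound (SPEquiv.seqAssoc u v w)

@[simp] lemma par_eps_right (U : Pomset A) : par U eps = U :=
  Quotient.inductionOn U fun u => Quotient.sound (SPEquiv.parOne u)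

lemma par_comm (U V : Pomset A) : par U V = par V U :=
  Quotient.inductionOn₂ U V fun u v => Quotient.sound (SPEquiv.parComm u v)

@[simp] lemma parProd_pair (U V : Pomset A) : parProd [U, V] = par U V := by
  simp [parProd]

end Pomset

lemma parProd_mem_langPar {A α β : Type} (S : α → Set (Pomset A))
    (l : List (α × Pomset A × β)) {x y : α}
    (hl : (↑(l.map Prod.fst) : Multiset α) = {x, y}) (hS : ∀ p ∈ l, p.2.1 ∈ S p.1) :
    Pomset.parProd (l.map fun p => p.2.1) ∈ langPar (S x) (S y) := by
  rcases List.perm_pair.1 (Multiset.coe_eq_coe.1 hl) with h | h <;>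
    simp only [List.map_eq_cons_iff, List.map_eq_nil_iff] at h <;>
    obtain ⟨p, _, rfl, rfl, q, _, rfl, rfl, rfl⟩ := h <;>
    simp only [List.forall_mem_cons, List.not_mem_nil, IsEmpty.forall_iff, implies_true,
      and_true, List.map_cons, List.map_nil, Pomset.parProd_pair] at hS ⊢
  · exact ⟨_, hS.1, _, hS.2, rfl⟩
  · exact ⟨_, hS.2, _, hS.1, Pomset.par_comm _ _⟩

lemma eps_mem_sem {A : Type} {e : SR A} (h : EF e) : Pomset.eps ∈ sem e := by
  induction h with
  | one => rfl
  | plusLeft f _ ih => exact Or.inl ih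
  | plusRight e _ ih => exact Or.inr ih
  | seq _ _ ih₁ ih₂ => exact ⟨_, ih₁, _, ih₂, Pomset.seq_eps_right _⟩
  | par _ _ ih₁ ih₂ => exact ⟨_, ih₁, _, ih₂, Pomset.par_eps_right _⟩
  | star e => exact Set.mem_iUnion.2 ⟨0, rfl⟩

lemma seq_mem_langStar {A : Type} {L : Set (Pomset A)} {U V : Pomset A} (hU : U ∈ L)
    (hV : V ∈ langStar L) : U.seq V ∈ langStar L := by
  obtain ⟨n, hn⟩ := Set.mem_iUnion.1 hV
  exact Set.mem_iUnion.2 ⟨n + 1, U, hU, V, hn, rfl⟩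

lemma seq_mem_sem_of_mem_deltaS {A : Type} {e g : SR A} {a : A} (hg : g ∈ deltaS e a)
    {V : Pomset A} (hV : V ∈ sem g) : (Pomset.atom a).seq V ∈ sem e := by
  induction e generalizing g V with
  | zero | one | par => exact absurd hg (Set.notMem_empty _)
  | atom b =>
    obtain ⟨rfl, rfl⟩ := hg
    rw [Set.mem_singleton_iff.1 hV, Pomset.seq_eps_right]
    rfl
  | plus e f ihe ihf => exact hg.imp (ihe · hV) (ihf · hV)
  | seq e f ihe ihf =>
    rcases hg with ⟨g', hg', rfl⟩ | ⟨hg, he⟩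
    · obtain ⟨V₁, hV₁, V₂, hV₂, rfl⟩ := hV
      exact ⟨_, ihe hg' hV₁, _, hV₂, Pomset.seq_assoc _ _ _⟩
    · exact ⟨_, eps_mem_sem he, _, ihf hg hV, Pomset.seq_eps_left _⟩
  | star e ihe =>
    obtain ⟨g', hg', rfl⟩ := hg
    obtain ⟨V₁, hV₁, V₂, hV₂, rfl⟩ := hV
    rw [← Pomset.seq_assoc]
    exact seq_mem_langStar (ihe hg' hV₁) hV₂

lemma seq_mem_sem_of_mem_gammaS {A : Type} {e g : SR A} (l : List (SR A × Pomset A × SR A))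
    (hl : ∀ x ∈ l, x.2.1 ∈ sem x.1) (hg : g ∈ gammaS e ↑(l.map Prod.fst))
    {V : Pomset A} (hV : V ∈ sem g) :
    (Pomset.parProd (l.map fun x => x.2.1)).seq V ∈ sem e := by
  induction e generalizing g V with
  | zero | one | atom => exact absurd hg (Set.notMem_empty _)
  | plus e f ihe ihf => exact hg.imp (ihe · hV) (ihf · hV)
  | seq e f ihe ihf =>
    rcases hg with ⟨g', hg', rfl⟩ | ⟨hg, he⟩
    · obtain ⟨V₁, hV₁, V₂, hV₂, rfl⟩ := hV
      exact ⟨_, ihe hg' hV₁, _, hV₂, Pomset.seq_assoc _ _ _⟩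
    · exact ⟨_, eps_mem_sem he, _, ihf hg hV, Pomset.seq_eps_left _⟩
  | par e f =>
    obtain ⟨rfl, hφ⟩ := hg
    rw [Set.mem_singleton_iff.1 hV, Pomset.seq_eps_right]
    exact parProd_mem_langPar sem l hφ hl
  | star e ihe =>
    obtain ⟨g', hg', rfl⟩ := hg
    obtain ⟨V₁, hV₁, V₂, hV₂, rfl⟩ := hV
    rw [← Pomset.seq_assoc]
    exact seq_mem_langStar (ihe hg' hV₁) hV₂

lemma Run.seq_mem_sem {A : Type} {e f : SR A} {U : Pomset A} (h : Run (synPA A) e U f)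
    {V : Pomset A} (hV : V ∈ sem f) : U.seq V ∈ sem e := by
  induction h generalizing V with
  | triv => rwa [Pomset.seq_eps_left]
  | seqUnit hδ => exact seq_mem_sem_of_mem_deltaS hδ hV
  | comp _ _ ih₁ ih₂ => exact Pomset.seq_assoc _ _ _ ▸ ih₁ (ih₂ hV)
  | parUnit l hγ hacc _ ih =>
    refine seq_mem_sem_of_mem_gammaS l (fun x hx => ?_) hγ hV
    simpa using ih x hx (eps_mem_sem (hacc x hx))

lemma lang_subset_sem {A : Type} (e : SR A) : (synPA A).lang e ⊆ sem e := by
  rintro U ⟨f, hf, hrun⟩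
  simpa using hrun.seq_mem_sem (eps_mem_sem hf)

section Automaton

variable {A Q : Type} {M : PA A Q}

lemma PA.eps_mem_lang {q : Q} (hq : q ∈ M.acc) : Pomset.eps ∈ M.lang q :=
  ⟨q, hq, Run.triv q⟩

lemma Run.seq_mem_lang {q r : Q} {U V : Pomset A} (h : Run M q U r) (hV : V ∈ M.lang r) :
    U.seq V ∈ M.lang q :=
  let ⟨q', hq', h'⟩ := hV
  ⟨q', hq', h.comp h'⟩

lemma Run.eps_or_of_derivatives_subset {q₁ q₂ : Q} (hδ : ∀ a, M.δ q₁ a ⊆ M.δ q₂ a)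
    (hγ : ∀ φ, M.γ q₁ φ ⊆ M.γ q₂ φ) {U : Pomset A} {q' : Q} (h : Run M q₁ U q') :
    (U = Pomset.eps ∧ q' = q₁) ∨ Run M q₂ U q' := by
  induction h generalizing q₂ with
  | triv => exact Or.inl ⟨rfl, rfl⟩
  | seqUnit h => exact Or.inr (Run.seqUnit (hδ _ h))
  | parUnit l h hacc hrun => exact Or.inr (Run.parUnit l (hγ _ h) hacc hrun)
  | comp _ r₂ ih₁ ih₂ =>
    rcases ih₁ hδ hγ with ⟨rfl, rfl⟩ | r₁
    · rcases ih₂ hδ hγ with ⟨rfl, rfl⟩ | r₂'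
      · exact Or.inl ⟨Pomset.seq_eps_left _, rfl⟩
      · exact Or.inr ((Pomset.seq_eps_left _).symm ▸ r₂')
    · exact Or.inr (r₁.comp r₂)

lemma PA.lang_subset_of_derivatives_subset {q₁ q₂ : Q} (hδ : ∀ a, M.δ q₁ a ⊆ M.δ q₂ a)
    (hγ : ∀ φ, M.γ q₁ φ ⊆ M.γ q₂ φ) (hacc : q₁ ∈ M.acc → q₂ ∈ M.acc) :
    M.lang q₁ ⊆ M.lang q₂ := by
  rintro U ⟨q', hq', h⟩
  rcases h.eps_or_of_derivatives_subset hδ hγ with ⟨rfl, rfl⟩ | h₂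
  · exact PA.eps_mem_lang (hacc hq')
  · exact ⟨q', hq', h₂⟩

end Automaton

lemma Run.synPA_seq_right {A : Type} {e g : SR A} {U : Pomset A} (f : SR A)
    (h : Run (synPA A) e U g) : Run (synPA A) (e.seq f) U (g.seq f) := by
  induction h with
  | triv => exact Run.triv _
  | seqUnit h => exact Run.seqUnit (Or.inl ⟨_, h, rfl⟩)
  | comp _ _ ih₁ ih₂ => exact ih₁.comp ih₂
  | parUnit l h hacc hrun => exact Run.parUnit l (Or.inl ⟨_, h, rfl⟩) hacc hrun

lemma lang_subset_lang_seq_of_EF {A : Type} {g : SR A} (hg : EF g) (f : SR A) :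
    (synPA A).lang f ⊆ (synPA A).lang (g.seq f) :=
  PA.lang_subset_of_derivatives_subset (fun _ _ h => Or.inr ⟨h, hg⟩)
    (fun _ _ h => Or.inr ⟨h, hg⟩) (EF.seq hg)

lemma langSeq_lang_subset_lang_seq {A : Type} (e f : SR A) :
    langSeq ((synPA A).lang e) ((synPA A).lang f) ⊆ (synPA A).lang (e.seq f) := by
  rintro _ ⟨U, ⟨g, hg, h⟩, V, hV, rfl⟩
  exact (h.synPA_seq_right f).seq_mem_lang (lang_subset_lang_seq_of_EF hg f hV)

lemma langPar_lang_subset_lang_par {A : Type} (e f : SR A) :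
    langPar ((synPA A).lang e) ((synPA A).lang f) ⊆ (synPA A).lang (e.par f) := by
  rintro _ ⟨U, ⟨g, hg, hU⟩, V, ⟨h, hh, hV⟩, rfl⟩
  refine ⟨SR.one, EF.one, ?_⟩
  simpa using Run.parUnit (M := synPA A) (q := e.par f) [(e, U, g), (f, V, h)] ⟨rfl, rfl⟩
    (by simpa using ⟨hg, hh⟩) (by simpa using ⟨hU, hV⟩)

lemma lang_seq_star_subset_lang_star {A : Type} (e : SR A) :
    (synPA A).lang (e.seq e.star) ⊆ (synPA A).lang e.star :=
  PA.lang_subset_of_derivatives_subset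
    (fun _ _ h => h.elim id fun ⟨h, _⟩ => h) (fun _ _ h => h.elim id fun ⟨h, _⟩ => h)
    fun _ => EF.star e

lemma sem_subset_lang {A : Type} (e : SR A) : sem e ⊆ (synPA A).lang e := by
  induction e with
  | zero => exact Set.empty_subset _
  | one => exact Set.singleton_subset_iff.2 (PA.eps_mem_lang EF.one)
  | atom a => exact Set.singleton_subset_iff.2 ⟨SR.one, EF.one, Run.seqUnit ⟨rfl, rfl⟩⟩
  | plus e f ihe ihf =>
    refine Set.union_subset (ihe.trans ?_) (ihf.trans ?_)
    · exact PA.lang_subset_of_derivatives_subset (fun _ _ => Or.inl) (fun _ _ => Or.inl)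
        (EF.plusLeft f)
    · exact PA.lang_subset_of_derivatives_subset (fun _ _ => Or.inr) (fun _ _ => Or.inr)
        (EF.plusRight e)
  | seq e f ihe ihf =>
    exact (Set.image2_subset ihe ihf).trans (langSeq_lang_subset_lang_seq e f)
  | par e f ihe ihf =>
    exact (Set.image2_subset ihe ihf).trans (langPar_lang_subset_lang_par e f)
  | star e ihe =>
    refine Set.iUnion_subset fun n => ?_
    induction n with
    | zero => exact Set.singleton_subset_iff.2 (PA.eps_mem_lang (EF.star e))
    | succ n ihn =>
      exact (Set.image2_subset ihe ihn).trans
        ((langSeq_lang_subset_lang_seq e e.star).trans (lang_seq_star_subset_lang_star e))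

lemma lang_eq_sem {A : Type} (e : SR A) : (synPA A).lang e = sem e :=
  (lang_subset_sem e).antisymm (sem_subset_lang e)

/-- The language function of the syntactic pomset automaton is a homomorphism,
and consequently agrees with the semantics of sr-expressions. -/
theorem syntactic_pa_correct {A : Type} :
    (synPA A).lang SR.zero = ∅ ∧
    (synPA A).lang SR.one = {Pomset.eps} ∧
    (∀ a : A, (synPA A).lang (SR.atom a) = {Pomset.atom a}) ∧
    (∀ e f : SR A,
      (synPA A).lang (SR.plus e f) = (synPA A).lang e ∪ (synPA A).lang f) ∧
    (∀ e f : SR A,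
      (synPA A).lang (SR.seq e f) = langSeq ((synPA A).lang e) ((synPA A).lang f)) ∧
    (∀ e f : SR A,
      (synPA A).lang (SR.par e f) = langPar ((synPA A).lang e) ((synPA A).lang f)) ∧
    (∀ e : SR A, (synPA A).lang (SR.star e) = langStar ((synPA A).lang e)) ∧
    (∀ e : SR A, (synPA A).lang e = sem e) := by
  simp only [lang_eq_sem, sem, implies_true, and_self]

end WBKA
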